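/- arXiv:1512.09176 — 2 statements merged into one kernel-verified Lean document; each statement's English description precedes it below -/
import Mathlib

section
/- Let V(s,t) be the optimal value function of the course-sequencing Markov decision process defined by backward induction with terminal rewards U monotone in the state. If s ≼ s̃ (every course passed in s is passed in s̃), then V(s̃,t) ≥ V(s,t) for every quarter t. -/
open Finset

section Ew
variable {α : Type*} [DecidableEq α]

/-- Expectation of `f` under independent inclusion with success probabilities `p`. -/
noncomputable def Ew (S : Finset α) (p : α → ℝ) (f : Finset α → ℝ) : ℝ :=
  ∑ B ∈ S.powerset, ((∏ n ∈ B, p n) * ∏ n ∈ S \ B, (1 - p n)) * f B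

lemma Ew_empty (p : α → ℝ) (f : Finset α → ℝ) : Ew ∅ p f = f ∅ := by
  simp [Ew]

lemma Ew_insert {a : α} {S : Finset α} (p : α → ℝ) (f : Finset α → ℝ) (ha : a ∉ S) :
    Ew (insert a S) p f
      = Ew S p (fun B => (1 - p a) * f B + p a * f (insert a B)) := by
  unfold Ew
  rw [Finset.sum_powerset_insert ha, ← Finset.sum_add_distrib]
  refine Finset.sum_congr rfl fun B hB => ?_
  have hBS : B ⊆ S := Finset.mem_powerset.mp hB
  have haB : a ∉ B := fun h => ha (hBS h)
  have haSB : a ∉ S \ B := fun h => ha (Finset.mem_sdiff.mp h).1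
  have h1 : insert a S \ B = insert a (S \ B) := by
    ext x; simp only [Finset.mem_sdiff, Finset.mem_insert]
    constructor
    · rintro ⟨h | h, hx⟩
      · exact Or.inl h
      · exact Or.inr ⟨h, hx⟩
    · rintro (rfl | ⟨h, hx⟩)
      · exact ⟨Or.inl rfl, haB⟩
      · exact ⟨Or.inr h, hx⟩
  have h2 : insert a S \ insert a B = S \ B := by
    ext x; simp only [Finset.mem_sdiff, Finset.mem_insert, not_or]
    constructor
    · rintro ⟨h | h, hxa, hxB⟩
      · exact absurd h hxa
      · exact ⟨h, hxB⟩
    · rintro ⟨h, hx⟩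
      exact ⟨Or.inr h, fun hxa => ha (hxa ▸ h), hx⟩
  rw [h1, h2, Finset.prod_insert haSB, Finset.prod_insert haB]
  ring

lemma Ew_mono_f {S : Finset α} {p : α → ℝ} {f g : Finset α → ℝ}
    (hp0 : ∀ n, 0 ≤ p n) (hp1 : ∀ n, p n ≤ 1)
    (hfg : ∀ B ∈ S.powerset, f B ≤ g B) :
    Ew S p f ≤ Ew S p g := by
  refine Finset.sum_le_sum fun B hB => ?_
  have hw : 0 ≤ (∏ n ∈ B, p n) * ∏ n ∈ S \ B, (1 - p n) :=
    mul_nonneg (Finset.prod_nonneg fun n _ => hp0 n)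
      (Finset.prod_nonneg fun n _ => by linarith [hp1 n])
  exact mul_le_mul_of_nonneg_left (hfg B hB) hw

lemma Ew_mono_p {p q : α → ℝ} {f : Finset α → ℝ}
    (hp0 : ∀ n, 0 ≤ p n) (hpq : ∀ n, p n ≤ q n) (hq1 : ∀ n, q n ≤ 1)
    (hf : ∀ B B' : Finset α, B ⊆ B' → f B ≤ f B') (S : Finset α) :
    Ew S p f ≤ Ew S q f := by
  induction S using Finset.induction_on generalizing f with
  | empty => rw [Ew_empty, Ew_empty]
  | @insert a S ha IH =>
    rw [Ew_insert p f ha, Ew_insert q f ha]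
    have hp1 : ∀ n, p n ≤ 1 := fun n => le_trans (hpq n) (hq1 n)
    calc Ew S p (fun B => (1 - p a) * f B + p a * f (insert a B))
        ≤ Ew S p (fun B => (1 - q a) * f B + q a * f (insert a B)) := by
          refine Ew_mono_f hp0 hp1 fun B _ => ?_
          have h := hf B (insert a B) (Finset.subset_insert a B)
          nlinarith [hpq a]
      _ ≤ Ew S q (fun B => (1 - q a) * f B + q a * f (insert a B)) := by
          refine IH (fun B B' hBB' => ?_)
          have h1 := hf B B' hBB'
          have h2 := hf (insert a B) (insert a B') (Finset.insert_subset_insert a hBB')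
          have h3 : 0 ≤ q a := le_trans (hp0 a) (hpq a)
          have h4 : 0 ≤ 1 - q a := by linarith [hq1 a]
          nlinarith

lemma Ew_marg {p : α → ℝ} (g : Finset α → ℝ) (D S : Finset α) (hd : Disjoint D S) :
    Ew (D ∪ S) p (fun B => g (B ∩ S)) = Ew S p g := by
  induction D using Finset.induction_on with
  | empty =>
    rw [Finset.empty_union]
    unfold Ew
    refine Finset.sum_congr rfl fun B hB => ?_
    simp only [Finset.inter_eq_left.mpr (Finset.mem_powerset.mp hB)]
  | @insert a D ha IH =>
    have haS : a ∉ S := fun h => (Finset.disjoint_left.mp hd) (Finset.mem_insert_self a D) h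
    have hdDS : Disjoint D S := Finset.disjoint_of_subset_left (Finset.subset_insert a D) hd
    have haDS : a ∉ D ∪ S := by
      simp only [Finset.mem_union, not_or]; exact ⟨ha, haS⟩
    rw [Finset.insert_union, Ew_insert _ _ haDS]
    have : Ew (D ∪ S) p
        (fun B => (1 - p a) * g (B ∩ S) + p a * g (insert a B ∩ S))
        = Ew (D ∪ S) p (fun B => g (B ∩ S)) := by
      unfold Ew
      refine Finset.sum_congr rfl fun B _ => ?_
      simp only [Finset.insert_inter_of_notMem haS]
      ring
    rw [this, IH hdDS]

end Ew

/-- Monotonicity of the optimal value function of the course-sequencing MDP: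
if s ⊆ s̃ then V(s̃,t) ≥ V(s,t). -/
theorem stmt_5 {N T : ℕ}
    (feas : ℕ → Finset (Fin N) → Finset (Finset (Fin N)))
    (hne : ∀ t s, (feas t s).Nonempty)
    (hfeasRestrict : ∀ t (s s' : Finset (Fin N)) A, s ⊆ s' → A ∈ feas t s →
      A \ s' ∈ feas t s')
    (ε : Fin N → ℕ → ℝ)
    (hε0 : ∀ n k, 0 ≤ ε n k) (hε1 : ∀ n k, ε n k ≤ 1)
    (hεmono : ∀ n, Monotone (ε n))
    (U : Finset (Fin N) → ℕ → ℝ)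
    (hU : ∀ s s' : Finset (Fin N), s ⊆ s' → U s T ≤ U s' T)
    (V : Finset (Fin N) → ℕ → ℝ)
    (hVT : ∀ s, V s T = U s T)
    (hVrec : ∀ s t, t < T → V s t =
      (feas (t + 1) s).sup' (hne (t + 1) s) (fun A =>
        ∑ B ∈ A.powerset,
          ((∏ n ∈ B, (1 - ε n A.card)) * ∏ n ∈ A \ B, ε n A.card) *
            V (s ∪ B) (t + 1))) :
    ∀ (s s' : Finset (Fin N)) (t : ℕ), t ≤ T → s ⊆ s' → V s t ≤ V s' t := by
  suffices h : ∀ d s s' t, t + d = T → s ⊆ s' → V s t ≤ V s' t by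
    intro s s' t ht hss'
    exact h (T - t) s s' t (by omega) hss'
  intro d
  induction d with
  | zero =>
    intro s s' t ht hss'
    have : t = T := by omega
    subst this
    rw [hVT, hVT]
    exact hU s s' hss'
  | succ d IH =>
    intro s s' t ht hss'
    have htT : t < T := by omega
    have hIH : ∀ u u' : Finset (Fin N), u ⊆ u' → V u (t + 1) ≤ V u' (t + 1) :=
      fun u u' h => IH u u' (t + 1) (by omega) h
    rw [hVrec s t htT, hVrec s' t htT]
    refine Finset.sup'_le _ _ fun A hA => ?_
    set A' : Finset (Fin N) := A \ s' with hA'def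
    have hA'feas : A' ∈ feas (t + 1) s' := hfeasRestrict (t + 1) s s' A hss' hA
    have hA'sub : A' ⊆ A := Finset.sdiff_subset
    set p : Fin N → ℝ := fun n => 1 - ε n A.card with hp
    set q : Fin N → ℝ := fun n => 1 - ε n A'.card with hq
    have hp0 : ∀ n, 0 ≤ p n := fun n => by simp [hp]; linarith [hε1 n A.card]
    have hp1 : ∀ n, p n ≤ 1 := fun n => by simp [hp]; linarith [hε0 n A.card]
    have hpq : ∀ n, p n ≤ q n := fun n => by
      simp only [hp, hq]
      have := hεmono n (Finset.card_le_card hA'sub)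
      linarith
    have hq1 : ∀ n, q n ≤ 1 := fun n => by simp [hq]; linarith [hε0 n A'.card]
    have hL : (∑ B ∈ A.powerset,
          ((∏ n ∈ B, (1 - ε n A.card)) * ∏ n ∈ A \ B, ε n A.card) *
            V (s ∪ B) (t + 1)) = Ew A p (fun B => V (s ∪ B) (t + 1)) := by
      unfold Ew
      refine Finset.sum_congr rfl fun B _ => ?_
      simp [hp, sub_sub_cancel]
    have hR : (∑ B ∈ A'.powerset,
          ((∏ n ∈ B, (1 - ε n A'.card)) * ∏ n ∈ A' \ B, ε n A'.card) *
            V (s' ∪ B) (t + 1)) = Ew A' q (fun B => V (s' ∪ B) (t + 1)) := by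
      unfold Ew
      refine Finset.sum_congr rfl fun B _ => ?_
      simp [hq, sub_sub_cancel]
    rw [hL]
    calc Ew A p (fun B => V (s ∪ B) (t + 1))
        ≤ Ew A p (fun B => V (s' ∪ (B ∩ A')) (t + 1)) := by
          refine Ew_mono_f hp0 hp1 fun B hB => ?_
          refine hIH _ _ ?_
          intro x hx
          rcases Finset.mem_union.mp hx with hxs | hxB
          · exact Finset.mem_union_left _ (hss' hxs)
          · by_cases hxs' : x ∈ s'
            · exact Finset.mem_union_left _ hxs'
            · refine Finset.mem_union_right _ (Finset.mem_inter.mpr ⟨hxB, ?_⟩)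
              exact Finset.mem_sdiff.mpr ⟨Finset.mem_powerset.mp hB hxB, hxs'⟩
      _ = Ew A' p (fun B => V (s' ∪ B) (t + 1)) := by
          have hdisj : Disjoint (A \ A') A' := Finset.sdiff_disjoint
          have hU2 : A \ A' ∪ A' = A := Finset.sdiff_union_of_subset hA'sub
          rw [← hU2]
          exact Ew_marg (fun B => V (s' ∪ B) (t + 1)) (A \ A') A' hdisj
      _ ≤ Ew A' q (fun B => V (s' ∪ B) (t + 1)) := by
          refine Ew_mono_p hp0 hpq hq1 (fun B B' hBB' => ?_) A'
          exact hIH _ _ (Finset.union_subset_union_right hBB')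
      _ ≤ _ := by
          rw [← hR]
          exact Finset.le_sup' (fun A => ∑ B ∈ A.powerset,
            ((∏ n ∈ B, (1 - ε n A.card)) * ∏ n ∈ A \ B, ε n A.card) *
              V (s' ∪ B) (t + 1)) hA'feas
end

section
/- With no prerequisites, all courses offered every quarter, and per-course failure probabilities ε_n independent of the number of simultaneous courses, the optimal policy takes the maximum allowed number C of courses each quarter: for any state s and quarter t, adding one more feasible course to any elected set of size K < C weakly increases the expected value, i.e. Q(s,t,A ∪ {n}) ≥ Q(s,t,A) for any feasible course n ∉ A. -/
open Finset

/-- With failure probabilities independent of the number of simultaneous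
courses and a monotone value function, adding one more feasible course to the
elected set weakly increases the expected value: Q(s,A∪{n}) ≥ Q(s,A). -/
theorem stmt_6 {N : ℕ} (ε : Fin N → ℝ)
    (hε0 : ∀ n, 0 ≤ ε n) (hε1 : ∀ n, ε n ≤ 1)
    (V : Finset (Fin N) → ℝ)
    (hVmono : ∀ s s' : Finset (Fin N), s ⊆ s' → V s ≤ V s')
    (Q : Finset (Fin N) → Finset (Fin N) → ℝ)
    (hQ : ∀ s A, Q s A = ∑ B ∈ A.powerset,
      ((∏ m ∈ B, (1 - ε m)) * ∏ m ∈ A \ B, ε m) * V (s ∪ B)) :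
    ∀ (s A : Finset (Fin N)) (n : Fin N), n ∉ A →
      Q s A ≤ Q s (insert n A) := by
  intro s A n hn
  rw [hQ, hQ, Finset.sum_powerset_insert hn, ← Finset.sum_add_distrib]
  apply Finset.sum_le_sum
  intro B hB
  rw [Finset.mem_powerset] at hB
  have hnB : n ∉ B := fun h => hn (hB h)
  have hw0 : 0 ≤ ∏ m ∈ B, (1 - ε m) :=
    Finset.prod_nonneg fun m _ => by linarith [hε1 m]
  have hw1 : 0 ≤ ∏ m ∈ A \ B, ε m :=
    Finset.prod_nonneg fun m _ => hε0 m
  have hw : 0 ≤ (∏ m ∈ B, (1 - ε m)) * ∏ m ∈ A \ B, ε m := mul_nonneg hw0 hw1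
  have hsd1 : (insert n A) \ B = insert n (A \ B) := by
    rw [Finset.insert_sdiff_of_notMem _ hnB]
  have hsd2 : (insert n A) \ (insert n B) = A \ B := by
    rw [Finset.insert_sdiff_insert, Finset.sdiff_insert_of_notMem hn]
  rw [hsd1, hsd2, Finset.prod_insert (fun h => hn (Finset.mem_sdiff.mp h).1),
    Finset.prod_insert hnB]
  have hV : V (s ∪ B) ≤ V (s ∪ insert n B) :=
    hVmono _ _ (Finset.union_subset_union_right (Finset.subset_insert n B))
  have key : ((∏ m ∈ B, (1 - ε m)) * (ε n * ∏ m ∈ A \ B, ε m)) * V (s ∪ B)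
      + ((1 - ε n) * (∏ m ∈ B, (1 - ε m)) * ∏ m ∈ A \ B, ε m) * V (s ∪ insert n B)
      ≥ ((∏ m ∈ B, (1 - ε m)) * (ε n * ∏ m ∈ A \ B, ε m)) * V (s ∪ B)
      + ((1 - ε n) * (∏ m ∈ B, (1 - ε m)) * ∏ m ∈ A \ B, ε m) * V (s ∪ B) := by
    have : 0 ≤ (1 - ε n) * (∏ m ∈ B, (1 - ε m)) * ∏ m ∈ A \ B, ε m := by
      apply mul_nonneg (mul_nonneg (by linarith [hε1 n]) hw0) hw1
    nlinarith
  calc ((∏ m ∈ B, (1 - ε m)) * ∏ m ∈ A \ B, ε m) * V (s ∪ B)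
      = ((∏ m ∈ B, (1 - ε m)) * (ε n * ∏ m ∈ A \ B, ε m)) * V (s ∪ B)
        + ((1 - ε n) * (∏ m ∈ B, (1 - ε m)) * ∏ m ∈ A \ B, ε m) * V (s ∪ B) := by ring
    _ ≤ ((∏ m ∈ B, (1 - ε m)) * (ε n * ∏ m ∈ A \ B, ε m)) * V (s ∪ B)
        + ((1 - ε n) * (∏ m ∈ B, (1 - ε m)) * ∏ m ∈ A \ B, ε m) * V (s ∪ insert n B) := key
end
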